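/- Let I = (A, P1, P2, M1, k) be an ISR instance such that P2 admits a perfect stable matching. Let A_1 = {a_1, …, a_x} be the set of agents unmatched by M1 (x is even, since |A| is even because P2 admits a perfect matching). Construct I' = (A', P1', P2', M1', k') as follows: A' = A ∪ {a'_1, …, a'_x}; in both P1' and P2' each new agent a'_i accepts exactly two agents, with preference list a_i ≻ a'_{i+1} if i is odd and a_i ≻ a'_{i−1} if i is even, and a'_i is appended at the end of a_i's preference list in both profiles, while all other preferences are unchanged; M1' = M1 ∪ {{a_i, a'_i} : i ∈ [x]}; k' = k + 3x/2. Then: (a) M1' is a perfect matching that is stable with respect to P1'; (b) P2' admits a perfect stable matching; and (c) there is a matching M2 stable with respect to P2 with |M1 △ M2| ≤ k if and only if there is a matching M2' stable with respect to P2' with |M1' △ M2'| ≤ k'. -/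

import Mathlib

/-!
Lift a matching `M` on `A` to the extended instance by keeping its pairs, pairing each dummy
`a'_i` with `a_i` when `a_i` is unmatched by `M`, and pairing the two dummies `a'_{2j+1}`,
`a'_{2j+2}` with each other when both their agents are matched. A dummy ranks last for its agent
and accepts nobody but its agent and its buddy, so the lift of a stable matching is stable, and the
restriction to `A` of a stable matching of `P2'` is stable for `P2`. By the lone wolf theorem every
stable matching of `P2` is perfect; hence in a stable matching of `P2'` every agent of `A` is
matched inside `A`, the dummies are matched in buddy pairs, and it is the lift of its restriction.
Against `M1' = M1 ∪ {{a_i, a'_i}}` these `x` pairs `{a_i, a'_i}` and `x/2` buddy pairs add exactly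
`3x/2` to the symmetric difference.
-/

/-- A preference profile: each agent has a finite set of acceptable agents and a
rank function encoding its preference list (lower rank = more preferred). -/
structure PrefProfile (A : Type*) where
  acc : A → Finset A
  rank : A → A → ℕ

namespace PrefProfile

variable {A : Type*} (P : PrefProfile A)

/-- Agent `a` strictly prefers `b` to `c`. -/
def Prefers (a b c : A) : Prop := P.rank a b < P.rank a c

/-- A lawful SR(-T) profile: no agent accepts itself and acceptability is symmetric. -/
def Lawful : Prop := (∀ a, a ∉ P.acc a) ∧ (∀ a b : A, b ∈ P.acc a → a ∈ P.acc b)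

/-- Strict preferences: no ties among acceptable agents. -/
def Strict : Prop := ∀ a : A, ∀ b ∈ P.acc a, ∀ c ∈ P.acc a, P.rank a b = P.rank a c → b = c

end PrefProfile

/-- A finite set of unordered pairs of agents is a matching if its pairs are
non-diagonal and pairwise disjoint. -/
def IsMatching {A : Type*} (M : Finset (Sym2 A)) : Prop :=
  (∀ p ∈ M, ¬ p.IsDiag) ∧ ∀ a b c : A, s(a, b) ∈ M → s(a, c) ∈ M → b = c

/-- `a` is matched in `M`. -/
def Matched {A : Type*} (M : Finset (Sym2 A)) (a : A) : Prop := ∃ b, s(a, b) ∈ M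

/-- A matching is perfect if it matches all agents. -/
def IsPerfect {A : Type*} (M : Finset (Sym2 A)) : Prop := ∀ a, Matched M a

/-- All pairs of `M` consist of mutually acceptable agents w.r.t. `P`. -/
def Acceptable {A : Type*} (P : PrefProfile A) (M : Finset (Sym2 A)) : Prop :=
  ∀ a b : A, s(a, b) ∈ M → b ∈ P.acc a

/-- The pair `{a, b}` blocks `M` w.r.t. `P`: `a` and `b` accept each other, and each
of them is either unmatched or strictly prefers the other to its partner. -/
def Blocks {A : Type*} (P : PrefProfile A) (M : Finset (Sym2 A)) (a b : A) : Prop :=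
  b ∈ P.acc a ∧ a ∈ P.acc b ∧
    (∀ c, s(a, c) ∈ M → P.Prefers a b c) ∧ (∀ c, s(b, c) ∈ M → P.Prefers b a c)

/-- `M` is a (weakly) stable matching for `P`. -/
def IsStable {A : Type*} (P : PrefProfile A) (M : Finset (Sym2 A)) : Prop :=
  IsMatching M ∧ Acceptable P M ∧ ∀ a b : A, ¬ Blocks P M a b

section LoneWolf

variable {α : Type*}

lemma Sym2.mk_mem_swap {M : Finset (Sym2 α)} {a b : α} (h : s(a, b) ∈ M) : s(b, a) ∈ M := by
  rwa [Sym2.eq_swap]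

lemma Blocks.symm {P : PrefProfile α} {M : Finset (Sym2 α)} {a b : α}
    (h : Blocks P M a b) : Blocks P M b a :=
  ⟨h.2.1, h.1, h.2.2.2, h.2.2.1⟩

lemma exists_seq_of_forall_exists_next {Q : ℕ → α → α → Prop} {x y : α} (h₀ : Q 0 x y)
    (hnext : ∀ n x y, Q n x y → ∃ z, Q (n + 1) y z) :
    ∃ b : ℕ → α, b 0 = x ∧ ∀ n, Q n (b n) (b (n + 1)) := by
  choose next hnext using hnext
  let c : (n : ℕ) → {p : α × α // Q n p.1 p.2} := fun n =>
    Nat.rec ⟨(x, y), h₀⟩ (fun n p => ⟨(p.1.2, next n _ _ p.2), hnext n _ _ p.2⟩) n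
  exact ⟨fun n => (c n).1.1, rfl, fun n => (c n).2⟩

lemma exists_pos_apply_eq_apply_zero [Finite α] (f : ℕ → α)
    (hf : ∀ i j, f (i + 1) = f (j + 1) → f i = f j) : ∃ p, 0 < p ∧ f p = f 0 := by
  have key : ∀ i d, f i = f (i + d + 1) → f (d + 1) = f 0 := by
    intro i d
    induction i with
    | zero => simp [eq_comm]
    | succ i ih =>
      exact fun h => ih (hf _ _ (by rwa [show i + 1 + d + 1 = i + d + 1 + 1 by omega] at h))
  obtain ⟨i, j, hij, hfij⟩ := Finite.exists_ne_map_eq_of_infinite f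
  rcases hij.lt_or_gt with h | h
  · obtain ⟨d, rfl⟩ := Nat.exists_eq_add_of_lt h
    exact ⟨d + 1, d.succ_pos, key i d hfij⟩
  · obtain ⟨d, rfl⟩ := Nat.exists_eq_add_of_lt h
    exact ⟨d + 1, d.succ_pos, key j d hfij.symm⟩

namespace IsStable

variable {P : PrefProfile α} {M N : Finset (Sym2 α)}

lemma exists_better_partner (hM : IsStable P M) (hs : P.Strict) (hN : Acceptable P N)
    {x y : α} (hxy : s(x, y) ∈ N) (hx : ∀ c, s(x, c) ∈ M → P.Prefers x y c) :
    ∃ z, s(y, z) ∈ M ∧ P.Prefers y z x := by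
  by_contra! hy
  refine hM.2.2 x y ⟨hN x y hxy, hN y x (Sym2.mk_mem_swap hxy), hx, fun c hc => ?_⟩
  have hcx : c ≠ x := by
    rintro rfl
    exact lt_irrefl _ (hx y (Sym2.mk_mem_swap hc))
  exact (not_lt.1 (hy c hc)).lt_of_ne
    fun h => hcx (hs y c (hM.2.1 y c hc) x (hN y x (Sym2.mk_mem_swap hxy)) h.symm)

/-- The lone wolf theorem, in the case of a perfect stable matching. -/
theorem isPerfect_of_isPerfect [Finite α] (hs : P.Strict) (hM : IsStable P M)
    (hN : IsStable P N) (hNp : IsPerfect N) : IsPerfect M := by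
  intro a
  by_contra ha
  let E : ℕ → Finset (Sym2 α) := fun n => bif n.bodd then M else N
  have hE : ∀ n, IsStable P (E n) := fun n => by unfold E; cases n.bodd <;> assumption
  have hE₂ : ∀ n, E (n + 2) = E n := fun n => by simp [E, Nat.bodd_succ]
  -- an alternating path from `a`, every agent on it preferring its successor to its predecessor
  obtain ⟨b₁, hab₁⟩ := hNp a
  obtain ⟨b, hb₀, hb⟩ := exists_seq_of_forall_exists_next
    (Q := fun n x y => s(x, y) ∈ E n ∧ ∀ c, s(x, c) ∈ E (n + 1) → P.Prefers x y c)
    ⟨hab₁, fun c hc => (ha ⟨c, by simpa [E] using hc⟩).elim⟩ <| by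
      rintro n x y ⟨hxy, hx⟩
      obtain ⟨z, hyz, hz⟩ := (hE (n + 1)).exists_better_partner hs (hE n).2.1 hxy hx
      refine ⟨z, hyz, fun c hc => ?_⟩
      rw [hE₂] at hc
      rwa [(hE n).1.2 _ _ _ hc (Sym2.mk_mem_swap hxy)]
  -- the path can be traced back uniquely, so it returns to `a`, which is impossible
  obtain ⟨p, hp, hbp⟩ := exists_pos_apply_eq_apply_zero (fun n => (b n, n.bodd)) <| by
    simp only [Prod.mk.injEq, Nat.bodd_succ, Bool.not_inj_iff]
    rintro i j ⟨hij, hpar⟩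
    refine ⟨(hE i).1.2 _ _ _ (Sym2.mk_mem_swap (hb i).1) ?_, hpar⟩
    rw [hij, show E i = E j by simp [E, hpar]]
    exact Sym2.mk_mem_swap (hb j).1
  obtain ⟨m, rfl⟩ := Nat.exists_eq_add_of_lt hp
  simp only [Prod.mk.injEq, Nat.bodd_succ, zero_add, Nat.bodd_zero, Bool.not_eq_false'] at hbp
  obtain ⟨hbm, hodd⟩ := hbp
  have hmM : s(b m, b (m + 1)) ∈ M := by simpa [E, hodd] using (hb m).1
  exact ha ⟨b m, by rw [← hb₀, ← hbm]; exact Sym2.mk_mem_swap hmM⟩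

end IsStable

end LoneWolf

section ImageMap

variable {α β : Type*} [DecidableEq β] {M : Finset (Sym2 α)}

lemma Sym2.mk_mem_image_map_iff {f : α → β} (hf : Function.Injective f) {a b : α} :
    s(f a, f b) ∈ M.image (Sym2.map f) ↔ s(a, b) ∈ M := by
  rw [← Sym2.map_mk, (Sym2.map.injective hf).mem_finset_image]

lemma Sym2.mem_range_of_mk_mem_image_map {f : α → β} {x y : β}
    (h : s(x, y) ∈ M.image (Sym2.map f)) : y ∈ Set.range f := by
  obtain ⟨e, -, he⟩ := Finset.mem_image.1 h
  obtain ⟨a, -, ha⟩ := Sym2.mem_map.1 (he ▸ Sym2.mem_mk_right x y)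
  exact ⟨a, ha⟩

variable {γ : Type*} [DecidableEq α] [DecidableEq γ]

@[simp] lemma Sym2.inl_inl_mem_image_map_inl {a b : α} :
    s((Sum.inl a : α ⊕ γ), Sum.inl b) ∈ M.image (Sym2.map Sum.inl) ↔ s(a, b) ∈ M :=
  Sym2.mk_mem_image_map_iff Sum.inl_injective

@[simp] lemma Sym2.mk_inr_not_mem_image_map_inl {x : α ⊕ γ} {c : γ} :
    s(x, Sum.inr c) ∉ M.image (Sym2.map Sum.inl) :=
  fun h => by simpa using Sym2.mem_range_of_mk_mem_image_map h

@[simp] lemma Sym2.inr_mk_not_mem_image_map_inl {x : α ⊕ γ} {c : γ} :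
    s(Sum.inr c, x) ∉ M.image (Sym2.map Sum.inl) := by
  rw [Sym2.eq_swap]; exact Sym2.mk_inr_not_mem_image_map_inl

end ImageMap

noncomputable section
open Classical

variable {A : Type*} [Fintype A] [DecidableEq A]

/-- The extension of a profile `P` on `A` by `x = 2t` new dummy agents
`a'_1, …, a'_x` (represented as pairs `(j, b) : Fin t × Bool`, consecutive dummies
`a'_{2j+1}, a'_{2j+2}` being `(j, false)` and `(j, true)`), where `en (j, b)` is the
corresponding agent `a_i` unmatched by `M1`: each new agent `(j, b)` accepts exactly
`en (j, b)` (its first choice) and its buddy `(j, !b)` (its second choice), the new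
agent `(j, b)` is appended at the very end of the preference list of `en (j, b)`,
and all other preferences are unchanged. -/
def extProfile6 (P : PrefProfile A) (t : ℕ) (en : Fin t × Bool → A) :
    PrefProfile (A ⊕ Fin t × Bool) where
  acc x :=
    match x with
    | Sum.inl a =>
        (P.acc a).image Sum.inl ∪
          (Finset.univ.filter fun p : Fin t × Bool => en p = a).image Sum.inr
    | Sum.inr p => {Sum.inl (en p), Sum.inr (p.1, !p.2)}
  rank x y :=
    match x, y with
    | Sum.inl a, Sum.inl b => P.rank a b
    | Sum.inl a, Sum.inr _ => ((P.acc a).sup (P.rank a)) + 1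
    | Sum.inr _, Sum.inl _ => 0
    | Sum.inr _, Sum.inr _ => 1

/-- `M1' = M1 ∪ {{a_i, a'_i} : i ∈ [x]}`. -/
def extM6 (M1 : Finset (Sym2 A)) (t : ℕ) (en : Fin t × Bool → A) :
    Finset (Sym2 (A ⊕ Fin t × Bool)) :=
  M1.image (Sym2.map Sum.inl) ∪
    Finset.univ.image fun p : Fin t × Bool => s(Sum.inl (en p), Sum.inr p)

end

section Extension

variable {A : Type*} {t : ℕ} {en : Fin t × Bool → A}
  {P : PrefProfile A} {M : Finset (Sym2 A)} {a b : A} {p q : Fin t × Bool}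

noncomputable def restrictMatching (M' : Finset (Sym2 (A ⊕ Fin t × Bool))) : Finset (Sym2 A) :=
  M'.preimage (Sym2.map Sum.inl) (Sym2.map.injective Sum.inl_injective).injOn

@[simp] lemma mem_restrictMatching {M' : Finset (Sym2 (A ⊕ Fin t × Bool))} :
    s(a, b) ∈ restrictMatching M' ↔ s(Sum.inl a, Sum.inl b) ∈ M' := by
  simp [restrictMatching]

variable [DecidableEq A]

@[simp] lemma inl_mem_extProfile6_acc_inl :
    Sum.inl b ∈ (extProfile6 P t en).acc (Sum.inl a) ↔ b ∈ P.acc a := by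
  simp [extProfile6]

@[simp] lemma inr_mem_extProfile6_acc_inl :
    Sum.inr p ∈ (extProfile6 P t en).acc (Sum.inl a) ↔ en p = a := by
  simp [extProfile6]

@[simp] lemma inl_mem_extProfile6_acc_inr :
    Sum.inl a ∈ (extProfile6 P t en).acc (Sum.inr p) ↔ a = en p := by
  simp [extProfile6]

@[simp] lemma inr_mem_extProfile6_acc_inr :
    Sum.inr q ∈ (extProfile6 P t en).acc (Sum.inr p) ↔ q = (p.1, !p.2) := by
  simp [extProfile6]

@[simp] lemma extProfile6_prefers_inl_inl {c : A} :
    (extProfile6 P t en).Prefers (Sum.inl a) (Sum.inl b) (Sum.inl c) ↔ P.Prefers a b c :=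
  Iff.rfl

lemma extProfile6_prefers_inl_inr (hb : b ∈ P.acc a) :
    (extProfile6 P t en).Prefers (Sum.inl a) (Sum.inl b) (Sum.inr p) :=
  Nat.lt_succ_of_le (Finset.le_sup hb)

lemma extProfile6_not_prefers_inl_inr_inl (hb : b ∈ P.acc a) :
    ¬ (extProfile6 P t en).Prefers (Sum.inl a) (Sum.inr p) (Sum.inl b) :=
  lt_asymm (extProfile6_prefers_inl_inr hb)

@[simp] lemma extProfile6_not_prefers_inr_inl {x : A ⊕ Fin t × Bool} :
    ¬ (extProfile6 P t en).Prefers (Sum.inr p) x (Sum.inl a) := by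
  cases x <;> simp [PrefProfile.Prefers, extProfile6]

@[simp] lemma extProfile6_not_prefers_inr_inr :
    ¬ (extProfile6 P t en).Prefers (Sum.inr p) (Sum.inr q) (Sum.inr q) :=
  lt_irrefl _

open Classical in
noncomputable def liftMatching (M : Finset (Sym2 A)) (t : ℕ) (en : Fin t × Bool → A) :
    Finset (Sym2 (A ⊕ Fin t × Bool)) :=
  M.image (Sym2.map Sum.inl) ∪
    (Finset.univ.filter fun p => ¬ Matched M (en p)).image
      (fun p => s(Sum.inl (en p), Sum.inr p)) ∪
    (Finset.univ.filter fun j : Fin t =>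
        Matched M (en (j, false)) ∧ Matched M (en (j, true))).image
      (fun j => s(Sum.inr (j, false), Sum.inr (j, true)))

@[simp] lemma inl_inl_mem_liftMatching :
    s(Sum.inl a, Sum.inl b) ∈ liftMatching M t en ↔ s(a, b) ∈ M := by
  simp only [liftMatching, Finset.mem_union, Sym2.inl_inl_mem_image_map_inl]
  simp

@[simp] lemma inl_inr_mem_liftMatching :
    s(Sum.inl a, Sum.inr p) ∈ liftMatching M t en ↔ a = en p ∧ ¬ Matched M (en p) := by
  simp only [liftMatching, Finset.mem_union, Sym2.mk_inr_not_mem_image_map_inl, false_or]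
  simp [and_comm, eq_comm]

@[simp] lemma inr_inl_mem_liftMatching :
    s(Sum.inr p, Sum.inl a) ∈ liftMatching M t en ↔ a = en p ∧ ¬ Matched M (en p) := by
  rw [Sym2.eq_swap, inl_inr_mem_liftMatching]

@[simp] lemma inr_inr_mem_liftMatching :
    s(Sum.inr p, Sum.inr q) ∈ liftMatching M t en ↔
      q = (p.1, !p.2) ∧ Matched M (en p) ∧ Matched M (en q) := by
  simp only [liftMatching, Finset.mem_union, Sym2.mk_inr_not_mem_image_map_inl, false_or]
  rcases p with ⟨i, _ | _⟩ <;> rcases q with ⟨j, _ | _⟩ <;> aesop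

lemma liftMatching_isMatching (hM : IsMatching M) (hinj : Function.Injective en) :
    IsMatching (liftMatching M t en) := by
  refine ⟨fun e he => ?_, fun x y z hxy hxz => ?_⟩
  · induction e using Sym2.ind with
    | _ x y =>
      rw [Sym2.mk_isDiag_iff]
      rintro rfl
      rcases x with a | p
      · exact hM.1 _ (inl_inl_mem_liftMatching.1 he) rfl
      · simpa [Prod.ext_iff] using (inr_inr_mem_liftMatching.1 he).1
  · rcases x with a | p <;> rcases y with b | q <;> rcases z with c | r <;>
      simp only [inl_inl_mem_liftMatching, inl_inr_mem_liftMatching, inr_inl_mem_liftMatching,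
        inr_inr_mem_liftMatching, Matched, not_exists] at hxy hxz ⊢ <;> grind [IsMatching]

lemma liftMatching_acceptable (hM : Acceptable P M) :
    Acceptable (extProfile6 P t en) (liftMatching M t en) := by
  rintro (a | p) (b | q) h <;> simp at h ⊢
  · exact hM a b h
  · exact h.1.symm
  · exact h.1
  · exact h.1

lemma liftMatching_not_blocks_inr (hM : Acceptable P M) {y : A ⊕ Fin t × Bool} :
    ¬ Blocks (extProfile6 P t en) (liftMatching M t en) (Sum.inr p) y := by
  rintro ⟨hy, -, hp, hyp⟩
  by_cases hmp : Matched M (en p)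
  swap
  · exact extProfile6_not_prefers_inr_inl (hp _ (inr_inl_mem_liftMatching.2 ⟨rfl, hmp⟩))
  obtain ⟨c, hc⟩ := hmp
  rcases y with a | q <;> simp only [inl_mem_extProfile6_acc_inr, inr_mem_extProfile6_acc_inr] at hy
  · subst hy
    exact extProfile6_not_prefers_inl_inr_inl (hM _ _ hc) (hyp _ (inl_inl_mem_liftMatching.2 hc))
  · subst hy
    by_cases hmq : Matched M (en (p.1, !p.2))
    · exact extProfile6_not_prefers_inr_inr
        (hp _ (inr_inr_mem_liftMatching.2 ⟨rfl, ⟨c, hc⟩, hmq⟩))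
    · exact extProfile6_not_prefers_inr_inl (hyp _ (inr_inl_mem_liftMatching.2 ⟨rfl, hmq⟩))

lemma liftMatching_isStable (hM : IsStable P M) (hinj : Function.Injective en) :
    IsStable (extProfile6 P t en) (liftMatching M t en) := by
  refine ⟨liftMatching_isMatching hM.1 hinj, liftMatching_acceptable hM.2.1, ?_⟩
  rintro (a | p) y hb
  · rcases y with b | q
    · refine hM.2.2 a b ⟨?_, ?_, fun c hc => ?_, fun c hc => ?_⟩
      · simpa using hb.1
      · simpa using hb.2.1
      · simpa using hb.2.2.1 _ (inl_inl_mem_liftMatching.2 hc)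
      · simpa using hb.2.2.2 _ (inl_inl_mem_liftMatching.2 hc)
    · exact liftMatching_not_blocks_inr hM.2.1 hb.symm
  · exact liftMatching_not_blocks_inr hM.2.1 hb

lemma liftMatching_isPerfect (hM : IsPerfect M) : IsPerfect (liftMatching M t en) := by
  rintro (a | p)
  · obtain ⟨b, hb⟩ := hM a
    exact ⟨Sum.inl b, inl_inl_mem_liftMatching.2 hb⟩
  · exact ⟨Sum.inr (p.1, !p.2), inr_inr_mem_liftMatching.2 ⟨rfl, hM _, hM _⟩⟩

@[simp] lemma inl_inl_mem_extM6 : s(Sum.inl a, Sum.inl b) ∈ extM6 M t en ↔ s(a, b) ∈ M := by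
  simp only [extM6, Finset.mem_union, Sym2.inl_inl_mem_image_map_inl]
  simp

@[simp] lemma inl_inr_mem_extM6 : s(Sum.inl a, Sum.inr p) ∈ extM6 M t en ↔ a = en p := by
  simp only [extM6, Finset.mem_union, Sym2.mk_inr_not_mem_image_map_inl, false_or]
  simp [eq_comm]

@[simp] lemma inr_inl_mem_extM6 : s(Sum.inr p, Sum.inl a) ∈ extM6 M t en ↔ a = en p := by
  rw [Sym2.eq_swap, inl_inr_mem_extM6]

@[simp] lemma inr_inr_not_mem_extM6 : s(Sum.inr p, Sum.inr q) ∉ extM6 M t en := by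
  simp only [extM6, Finset.mem_union, Sym2.mk_inr_not_mem_image_map_inl, false_or]
  simp

lemma extM6_eq_liftMatching (h : ∀ p, ¬ Matched M (en p)) :
    extM6 M t en = liftMatching M t en := by
  ext e
  induction e using Sym2.ind with
  | _ x y => rcases x with a | p <;> rcases y with b | q <;> simp [h]

lemma extM6_isPerfect (h : ∀ a, ¬ Matched M a → a ∈ Set.range en) :
    IsPerfect (extM6 M t en) := by
  rintro (a | p)
  · by_cases ha : Matched M a
    · obtain ⟨b, hb⟩ := ha
      exact ⟨Sum.inl b, inl_inl_mem_extM6.2 hb⟩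
    · obtain ⟨p, rfl⟩ := h a ha
      exact ⟨Sum.inr p, inl_inr_mem_extM6.2 rfl⟩
  · exact ⟨Sum.inl (en p), inr_inl_mem_extM6.2 rfl⟩

lemma restrictMatching_isStable {M' : Finset (Sym2 (A ⊕ Fin t × Bool))}
    (hM' : IsStable (extProfile6 P t en) M') : IsStable P (restrictMatching M') := by
  obtain ⟨⟨hdiag, hmatch⟩, hacc, hblock⟩ := hM'
  refine ⟨⟨fun e he => ?_, fun a b c hab hac => ?_⟩, fun a b hab => ?_, fun a b hab => ?_⟩
  · induction e using Sym2.ind with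
    | _ a b =>
      rw [Sym2.mk_isDiag_iff]
      rintro rfl
      exact hdiag _ (mem_restrictMatching.1 he) rfl
  · exact Sum.inl_injective
      (hmatch _ _ _ (mem_restrictMatching.1 hab) (mem_restrictMatching.1 hac))
  · simpa using hacc _ _ (mem_restrictMatching.1 hab)
  · obtain ⟨hb, ha, hpa, hpb⟩ := hab
    refine hblock (Sum.inl a) (Sum.inl b) ⟨by simpa, by simpa, ?_, ?_⟩
    · rintro (c | p) hc
      · simpa using hpa c (mem_restrictMatching.2 hc)
      · exact extProfile6_prefers_inl_inr hb
    · rintro (c | p) hc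
      · simpa using hpb c (mem_restrictMatching.2 hc)
      · exact extProfile6_prefers_inl_inr ha

lemma eq_liftMatching_restrictMatching {M' : Finset (Sym2 (A ⊕ Fin t × Bool))}
    (hM' : IsStable (extProfile6 P t en) M') (hperf : IsPerfect (restrictMatching M')) :
    M' = liftMatching (restrictMatching M') t en := by
  -- the first choice `en p` of a dummy `p` is taken, so dummies can only pair up with each other
  have hdummy : ∀ p x, s(Sum.inr p, x) ∈ M' → x = Sum.inr (p.1, !p.2) := by
    intro p x hx
    have hx' := hM'.2.1 _ _ hx
    rcases x with a | q
    · obtain rfl : a = en p := by simpa using hx'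
      obtain ⟨c, hc⟩ := hperf (en p)
      simpa using hM'.1.2 _ _ _ (Sym2.mk_mem_swap hx) (mem_restrictMatching.1 hc)
    · simpa using hx'
  have hbuddy : ∀ p : Fin t × Bool, s(Sum.inr p, Sum.inr (p.1, !p.2)) ∈ M' := by
    intro p
    by_contra hp
    refine hM'.2.2 (Sum.inr p) (Sum.inr (p.1, !p.2)) ⟨by simp, by simp, ?_, ?_⟩
    · intro c hc
      exact absurd (hdummy p c hc ▸ hc) hp
    · intro c hc
      obtain rfl := hdummy _ c hc
      exact absurd (Sym2.mk_mem_swap hc) (by simpa using hp)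
  ext e
  induction e using Sym2.ind with
  | _ x y =>
    rcases x with a | p <;> rcases y with b | q
    · simp
    · simpa [hperf _] using fun h => hdummy q (Sum.inl a) (Sym2.mk_mem_swap h)
    · simpa [hperf _] using hdummy p (Sum.inl b)
    · simp only [inr_inr_mem_liftMatching, hperf _, and_true]
      exact ⟨fun h => by simpa using hdummy p _ h, by rintro rfl; exact hbuddy p⟩

def dummyPairs (t : ℕ) (en : Fin t × Bool → A) : Finset (Sym2 (A ⊕ Fin t × Bool)) :=
  Finset.univ.image fun p => s(Sum.inl (en p), Sum.inr p)

def buddyPairs (A : Type*) [DecidableEq A] (t : ℕ) : Finset (Sym2 (A ⊕ Fin t × Bool)) :=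
  Finset.univ.image fun j : Fin t => s(Sum.inr (j, false), Sum.inr (j, true))

lemma card_dummyPairs : (dummyPairs t en).card = 2 * t := by
  rw [dummyPairs,
    Finset.card_image_of_injective _ fun p q h => (by simpa using h : _ ∧ p = q).2]
  simp [mul_comm]

lemma card_buddyPairs : (buddyPairs A t).card = t := by
  rw [buddyPairs, Finset.card_image_of_injective _ (fun i j h => by simpa using h)]
  simp

lemma symmDiff_extM6_liftMatching {M₁ : Finset (Sym2 A)} (hM : IsPerfect M) :
    symmDiff (extM6 M₁ t en) (liftMatching M t en) =
      (symmDiff M₁ M).image (Sym2.map Sum.inl) ∪ dummyPairs t en ∪ buddyPairs A t := by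
  ext e
  induction e using Sym2.ind with
  | _ x y =>
    rcases x with a | p <;> rcases y with b | q <;>
      simp only [Finset.mem_symmDiff, Finset.mem_union, Sym2.inl_inl_mem_image_map_inl,
        Sym2.mk_inr_not_mem_image_map_inl, Sym2.inr_mk_not_mem_image_map_inl, false_or]
    · simp [dummyPairs, buddyPairs]
    · simp [dummyPairs, buddyPairs, hM _, eq_comm]
    · simp [dummyPairs, buddyPairs, hM _, eq_comm]
    · rcases p with ⟨i, _ | _⟩ <;> rcases q with ⟨j, _ | _⟩ <;>
        simp [dummyPairs, buddyPairs, hM _, eq_comm]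

lemma card_symmDiff_extM6_liftMatching {M₁ : Finset (Sym2 A)} (hM : IsPerfect M) :
    (symmDiff (extM6 M₁ t en) (liftMatching M t en)).card = (symmDiff M₁ M).card + 3 * t := by
  have h₁ : Disjoint ((symmDiff M₁ M).image (Sym2.map Sum.inl)) (dummyPairs t en) := by
    refine Finset.disjoint_right.2 fun e he => ?_
    obtain ⟨p, -, rfl⟩ := Finset.mem_image.1 he
    exact Sym2.mk_inr_not_mem_image_map_inl
  have h₂ : Disjoint ((symmDiff M₁ M).image (Sym2.map Sum.inl) ∪ dummyPairs t en)
      (buddyPairs A t) := by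
    refine Finset.disjoint_right.2 fun e he => ?_
    obtain ⟨j, -, rfl⟩ := Finset.mem_image.1 he
    rw [Finset.mem_union, not_or]
    exact ⟨Sym2.mk_inr_not_mem_image_map_inl, by simp [dummyPairs]⟩
  rw [symmDiff_extM6_liftMatching hM, Finset.card_union_of_disjoint h₂,
    Finset.card_union_of_disjoint h₁, card_dummyPairs, card_buddyPairs,
    Finset.card_image_of_injective _ (Sym2.map.injective Sum.inl_injective)]
  ring

end Extension

noncomputable section
open Classical

variable {A : Type*} [Fintype A] [DecidableEq A]

theorem stmt6_general (P1 P2 : PrefProfile A) (hs2 : P2.Strict)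
    (M1 : Finset (Sym2 A)) (hM1 : IsStable P1 M1) (k : ℕ)
    (t : ℕ) (en : Fin t × Bool → A) (hinj : Function.Injective en)
    (hrange : ∀ a : A, ¬ Matched M1 a ↔ a ∈ Set.range en)
    (hex : ∃ M : Finset (Sym2 A), IsStable P2 M ∧ IsPerfect M) :
    (IsStable (extProfile6 P1 t en) (extM6 M1 t en) ∧ IsPerfect (extM6 M1 t en)) ∧
    (∃ M, IsStable (extProfile6 P2 t en) M ∧ IsPerfect M) ∧
    ((∃ M2, IsStable P2 M2 ∧ (symmDiff M1 M2).card ≤ k) ↔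
     (∃ M2', IsStable (extProfile6 P2 t en) M2' ∧
        (symmDiff (extM6 M1 t en) M2').card ≤ k + 3 * t)) := by
  obtain ⟨M, hM, hMp⟩ := hex
  have hperfect {N : Finset (Sym2 A)} (hN : IsStable P2 N) : IsPerfect N :=
    hN.isPerfect_of_isPerfect hs2 hM hMp
  have hM1' : extM6 M1 t en = liftMatching M1 t en :=
    extM6_eq_liftMatching fun p => (hrange (en p)).2 ⟨p, rfl⟩
  refine ⟨⟨hM1' ▸ liftMatching_isStable hM1 hinj, extM6_isPerfect fun a => (hrange a).1⟩,
    ⟨_, liftMatching_isStable hM hinj, liftMatching_isPerfect hMp⟩, ⟨?_, ?_⟩⟩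
  · rintro ⟨M2, hM2, hk⟩
    refine ⟨_, liftMatching_isStable hM2 hinj, ?_⟩
    rw [card_symmDiff_extM6_liftMatching (hperfect hM2)]
    omega
  · rintro ⟨M2', hM2', hk⟩
    have hR := restrictMatching_isStable hM2'
    rw [eq_liftMatching_restrictMatching hM2' (hperfect hR),
      card_symmDiff_extM6_liftMatching (hperfect hR)] at hk
    exact ⟨_, hR, by omega⟩

/-- Reducing an ISR instance whose second profile admits a perfect stable matching to
one where moreover the given initial matching is perfect: with `x = 2t` agents
unmatched by `M1` (enumerated by the injection `en`), (a) `M1'` is a perfect stable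
matching for `P1'`; (b) `P2'` admits a perfect stable matching; (c) there is a stable
matching for `P2` within symmetric difference `k` of `M1` iff there is a stable
matching for `P2'` within symmetric difference `k + 3x/2 = k + 3t` of `M1'`. -/
theorem stmt6 (P1 P2 : PrefProfile A)
    (hl1 : P1.Lawful) (hl2 : P2.Lawful) (hs1 : P1.Strict) (hs2 : P2.Strict)
    (M1 : Finset (Sym2 A)) (hM1 : IsStable P1 M1) (k : ℕ)
    (t : ℕ) (en : Fin t × Bool → A) (hinj : Function.Injective en)
    (hrange : ∀ a : A, ¬ Matched M1 a ↔ a ∈ Set.range en)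
    (hex : ∃ M : Finset (Sym2 A), IsStable P2 M ∧ IsPerfect M) :
    (IsStable (extProfile6 P1 t en) (extM6 M1 t en) ∧ IsPerfect (extM6 M1 t en)) ∧
    (∃ M, IsStable (extProfile6 P2 t en) M ∧ IsPerfect M) ∧
    ((∃ M2, IsStable P2 M2 ∧ (symmDiff M1 M2).card ≤ k) ↔
     (∃ M2', IsStable (extProfile6 P2 t en) M2' ∧
        (symmDiff (extM6 M1 t en) M2').card ≤ k + 3 * t)) :=
  stmt6_general P1 P2 hs2 M1 hM1 k t en hinj hrange hex
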